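/- Let Sol be a type (the solutions of a MAPF instance), let ξ, μ : Sol → ℕ be its sum-of-costs and makespan functions, let ξ₀, μ₀, Δ : ℕ with Δ ≥ 1, let ε > 0 be a real number, and let δ : ℕ with (δ : ℝ) ≤ ε · (ξ₀ + Δ). Assume: (i) for every solution s, ξ₀ ≤ ξ(s) and μ(s) ≤ μ₀ + (ξ(s) − ξ₀); (ii) there is no solution s with μ(s) ≤ μ₀ + Δ − 1 and ξ(s) ≤ ξ₀ + Δ + δ − 1; and (iii) there exists a solution s* with ξ(s*) ≤ ξ₀ + Δ + δ. Then for every solution s, (ξ(s*) : ℝ) ≤ (1 + ε) · ξ(s); in particular ξ(s*) ≤ (1 + ε) · ξ_opt where ξ_opt is the minimum of ξ over Sol. -/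

import Mathlib

/-!
A solution with makespan at most `μ₀ + Δ - 1` must cost at least `ξ₀ + Δ + δ` (the penultimate
formula was unsatisfiable), and one with larger makespan costs at least `ξ₀ + Δ` since the makespan
exceeds `μ₀` by at most `ξ s - ξ₀`. So every solution, in particular an optimal one, costs at least
`ξ₀ + Δ`, while the returned one costs at most `ξ₀ + Δ + δ ≤ (1 + ε) (ξ₀ + Δ)`.
-/

theorem add_le_cost_of_not_exists_cheap {Sol : Type*} (ξ μ : Sol → ℕ) (ξ₀ μ₀ Δ δ : ℕ)
    (hprop1 : ∀ s : Sol, ξ₀ ≤ ξ s ∧ μ s ≤ μ₀ + (ξ s - ξ₀))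
    (hunsat : ¬ ∃ s : Sol, μ s ≤ μ₀ + Δ - 1 ∧ ξ s ≤ ξ₀ + Δ + δ - 1) (s : Sol) :
    ξ₀ + Δ ≤ ξ s := by
  obtain ⟨hξ₀, hμ⟩ := hprop1 s
  by_cases hm : μ s ≤ μ₀ + Δ - 1
  · have hcost : ¬ ξ s ≤ ξ₀ + Δ + δ - 1 := fun h ↦ hunsat ⟨s, hm, h⟩
    omega
  · omega

theorem le_one_add_mul_of_le_add {K : Type*} [Field K] [LinearOrder K] [IsStrictOrderedRing K]
    {a b L δ ε : K} (hε : 0 ≤ ε) (ha : a ≤ L + δ) (hδ : δ ≤ ε * L) (hL : L ≤ b) :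
    a ≤ (1 + ε) * b :=
  calc a ≤ L + δ := ha
    _ ≤ (1 + ε) * L := by linarith
    _ ≤ (1 + ε) * b := mul_le_mul_of_nonneg_left hL (by linarith)

theorem emddsat_eps_bounded_suboptimal_general
    {Sol : Type*} (ξ μ : Sol → ℕ) (ξ₀ μ₀ Δ : ℕ)
    (ε : ℝ) (hε : 0 < ε) (δ : ℕ) (hδ : (δ : ℝ) ≤ ε * (ξ₀ + Δ))
    (hprop1 : ∀ s : Sol, ξ₀ ≤ ξ s ∧ μ s ≤ μ₀ + (ξ s - ξ₀))
    (hunsat : ¬ ∃ s : Sol, μ s ≤ μ₀ + Δ - 1 ∧ ξ s ≤ ξ₀ + Δ + δ - 1)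
    (s' : Sol) (hsat : ξ s' ≤ ξ₀ + Δ + δ) :
    (∀ s : Sol, (ξ s' : ℝ) ≤ (1 + ε) * (ξ s : ℝ)) ∧
      (ξ s' : ℝ) ≤ (1 + ε) * ((⨅ s : Sol, ξ s : ℕ) : ℝ) := by
  have bounded : ∀ s : Sol, (ξ s' : ℝ) ≤ (1 + ε) * (ξ s : ℝ) := fun s ↦
    le_one_add_mul_of_le_add hε.le (by exact_mod_cast hsat) hδ
      (by exact_mod_cast add_le_cost_of_not_exists_cheap ξ μ ξ₀ μ₀ Δ δ hprop1 hunsat s)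
  have : Nonempty Sol := ⟨s'⟩
  obtain ⟨sOpt, hsOpt⟩ := ciInf_mem ξ
  exact ⟨bounded, hsOpt ▸ bounded sOpt⟩

/-- Corollary 1: choosing `δ ≤ ε · (ξ₀ + Δ)` makes the returned solution
`(1 + ε)`-bounded suboptimal. -/
theorem emddsat_eps_bounded_suboptimal
    {Sol : Type*} (ξ μ : Sol → ℕ) (ξ₀ μ₀ Δ : ℕ) (hΔ : 1 ≤ Δ)
    (ε : ℝ) (hε : 0 < ε) (δ : ℕ) (hδ : (δ : ℝ) ≤ ε * (ξ₀ + Δ))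
    (hprop1 : ∀ s : Sol, ξ₀ ≤ ξ s ∧ μ s ≤ μ₀ + (ξ s - ξ₀))
    (hunsat : ¬ ∃ s : Sol, μ s ≤ μ₀ + Δ - 1 ∧ ξ s ≤ ξ₀ + Δ + δ - 1)
    (s' : Sol) (hsat : ξ s' ≤ ξ₀ + Δ + δ) :
    (∀ s : Sol, (ξ s' : ℝ) ≤ (1 + ε) * (ξ s : ℝ)) ∧
      (ξ s' : ℝ) ≤ (1 + ε) * ((⨅ s : Sol, ξ s : ℕ) : ℝ) :=
  emddsat_eps_bounded_suboptimal_general ξ μ ξ₀ μ₀ Δ ε hε δ hδ hprop1 hunsat s' hsat
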